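/- arXiv:1701.02229 — 5 statements merged into one kernel-verified Lean document; each statement's English description precedes it below -/
import Mathlib

section
/- Let E be a real inner product space, let p, w, x, z ∈ E, and let y lie on the segment [x, z]. If dist(w, x) ≤ dist(p, x) and dist(w, z) ≤ dist(p, z), then dist(w, y) ≤ dist(p, y). (Equivalently: the intersection of the closed disks centered at x and z, each passing through p, is contained in the closed disk centered at y passing through p.) -/
/-! The points at least as close to `w` as to `p` form a closed half-space: expanding the squared
distances, `dist w y ≤ dist p y` becomes a linear inequality in `y`. A half-space is convex, so it
contains the segment between any two of its points. -/

open scoped RealInnerProductSpace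

section

variable {E : Type*} [NormedAddCommGroup E] [InnerProductSpace ℝ E]

theorem dist_le_dist_iff_sq_sub_sq_div_two_le_inner (w p y : E) :
    dist w y ≤ dist p y ↔ (‖w‖ ^ 2 - ‖p‖ ^ 2) / 2 ≤ ⟪w - p, y⟫ := by
  rw [← sq_le_sq₀ dist_nonneg dist_nonneg, dist_eq_norm, dist_eq_norm, norm_sub_sq_real,
    norm_sub_sq_real, inner_sub_left]
  constructor <;> intro h <;> linarith

theorem convex_setOf_dist_le_dist (w p : E) : Convex ℝ {y | dist w y ≤ dist p y} := by
  simp_rw [dist_le_dist_iff_sq_sub_sq_div_two_le_inner]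
  exact convex_halfSpace_ge (innerₛₗ ℝ (w - p)).isLinear _

end

theorem stmt_0 {E : Type*} [NormedAddCommGroup E] [InnerProductSpace ℝ E]
    (p w x z y : E) (hy : y ∈ segment ℝ x z)
    (hx : dist w x ≤ dist p x) (hz : dist w z ≤ dist p z) :
    dist w y ≤ dist p y :=
  (convex_setOf_dist_le_dist w p).segment_subset hx hz hy
end

section
/- Let p ≠ p' be points of a real inner product space E, let m = (p + p')/2 be their midpoint, and let n ∈ E be a vector orthogonal to p' − p. For real numbers t₁ ≤ t₂ set y₁ = m + t₁·n and y₂ = m + t₂·n. Then for every w ∈ E with ⟨w − m, n⟩ ≥ 0: if dist(w, y₁) ≤ dist(y₁, p) then dist(w, y₂) ≤ dist(y₂, p). (The closed disk through p and p' centered at y₁, intersected with the closed half-plane on the n-side of the line pp', is contained in the closed disk through p and p' centered at y₂.) -/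
open scoped RealInnerProductSpace

theorem stmt_3 {E : Type*} [NormedAddCommGroup E] [InnerProductSpace ℝ E]
    (p p' : E) (hpp' : p ≠ p') (n : E) (hn : ⟪n, p' - p⟫ = 0)
    (t₁ t₂ : ℝ) (ht : t₁ ≤ t₂)
    (m y₁ y₂ : E) (hm : m = midpoint ℝ p p')
    (hy₁ : y₁ = m + t₁ • n) (hy₂ : y₂ = m + t₂ • n)
    (w : E) (hw : 0 ≤ ⟪w - m, n⟫) (h₁ : dist w y₁ ≤ dist y₁ p) :
    dist w y₂ ≤ dist y₂ p := by
  have hmp : ⟪m - p, n⟫ = 0 := by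
    rw [hm, midpoint_sub_left, real_inner_smul_left, real_inner_comm, hn,
      mul_zero]
  have hw1 : ∀ t : ℝ, w - (m + t • n) = (w - m) - t • n := by intro t; abel
  have hy1 : ∀ t : ℝ, (m + t • n) - p = (m - p) + t • n := by intro t; abel
  have edist : ∀ t : ℝ, dist w (m + t • n) ^ 2
      = ‖w - m‖ ^ 2 - 2 * t * ⟪w - m, n⟫ + t ^ 2 * ‖n‖ ^ 2 := by
    intro t
    rw [dist_eq_norm, hw1 t, norm_sub_sq_real, real_inner_smul_right,
      norm_smul]
    simp [mul_pow]
    try ring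
  have erad : ∀ t : ℝ, dist (m + t • n) p ^ 2
      = ‖m - p‖ ^ 2 + t ^ 2 * ‖n‖ ^ 2 := by
    intro t
    rw [dist_eq_norm, hy1 t, norm_add_sq_real, real_inner_smul_right, hmp,
      norm_smul]
    simp [mul_pow]
    try ring
  have hsq : dist w y₁ ^ 2 ≤ dist y₁ p ^ 2 :=
    pow_le_pow_left₀ dist_nonneg h₁ 2
  rw [hy₁, edist, erad] at hsq
  have hsq2 : dist w y₂ ^ 2 ≤ dist y₂ p ^ 2 := by
    rw [hy₂, edist, erad]
    nlinarith [mul_nonneg (sub_nonneg.2 ht) hw]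
  exact (pow_le_pow_iff_left₀ dist_nonneg dist_nonneg two_ne_zero).1 hsq2
end

section
/- Let p ≠ p' be points of a real inner product space E, m = (p+p')/2, and n orthogonal to p' − p. For t₁ ≤ t₂ set y₁ = m + t₁·n, y₂ = m + t₂·n, with radii rᵢ = dist(yᵢ, p). If q₁ satisfies dist(q₁, y₁) ≤ r₁ and dist(q₁, y₂) > r₂, and q₂ satisfies dist(q₂, y₂) ≤ r₂ and dist(q₂, y₁) > r₁, then ⟨q₁ − m, n⟩ < 0 < ⟨q₂ − m, n⟩; in particular q₁ and q₂ lie strictly on opposite sides of the line through p and p'. -/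
open scoped RealInnerProductSpace

theorem stmt_4 {E : Type*} [NormedAddCommGroup E] [InnerProductSpace ℝ E]
    (p p' : E) (hpp' : p ≠ p') (n : E) (hn : ⟪n, p' - p⟫ = 0)
    (t₁ t₂ : ℝ) (ht : t₁ ≤ t₂)
    (m y₁ y₂ : E) (hm : m = midpoint ℝ p p')
    (hy₁ : y₁ = m + t₁ • n) (hy₂ : y₂ = m + t₂ • n)
    (q₁ q₂ : E)
    (hq₁ : dist q₁ y₁ ≤ dist y₁ p) (hq₁' : dist y₂ p < dist q₁ y₂)
    (hq₂ : dist q₂ y₂ ≤ dist y₂ p) (hq₂' : dist y₁ p < dist q₂ y₁) :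
    ⟪q₁ - m, n⟫ < 0 ∧ 0 < ⟪q₂ - m, n⟫ := by
  have hmn : ⟪m - p, n⟫ = 0 := by
    have : m - p = (⅟2 : ℝ) • (p' - p) := by
      rw [hm, midpoint_sub_left]
    rw [this, real_inner_smul_left, real_inner_comm, hn, mul_zero]
  -- squared distance from q to m + t • n
  have key : ∀ (q : E) (t : ℝ),
      dist q (m + t • n) ^ 2
        = ‖q - m‖ ^ 2 - 2 * t * ⟪q - m, n⟫ + t ^ 2 * ‖n‖ ^ 2 := by
    intro q t
    have h1 : q - (m + t • n) = (q - m) - t • n := by abel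
    rw [dist_eq_norm, h1, norm_sub_sq_real, real_inner_smul_right, norm_smul]
    simp [mul_pow]
    ring
  have keyp : ∀ t : ℝ,
      dist (m + t • n) p ^ 2 = ‖m - p‖ ^ 2 + t ^ 2 * ‖n‖ ^ 2 := by
    intro t
    have h1 : (m + t • n) - p = (m - p) + t • n := by abel
    rw [dist_eq_norm, h1, norm_add_sq_real, real_inner_smul_right, hmn, norm_smul]
    simp [mul_pow]
  have sq_mono : ∀ a b : ℝ, 0 ≤ a → 0 ≤ b → a ≤ b → a ^ 2 ≤ b ^ 2 := by
    intro a b ha hb h; nlinarith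
  have sq_mono' : ∀ a b : ℝ, 0 ≤ a → 0 ≤ b → a < b → a ^ 2 < b ^ 2 := by
    intro a b ha hb h; nlinarith
  have H1 : dist q₁ y₁ ^ 2 ≤ dist y₁ p ^ 2 :=
    sq_mono _ _ dist_nonneg dist_nonneg hq₁
  have H1' : dist y₂ p ^ 2 < dist q₁ y₂ ^ 2 :=
    sq_mono' _ _ dist_nonneg dist_nonneg hq₁'
  have H2 : dist q₂ y₂ ^ 2 ≤ dist y₂ p ^ 2 :=
    sq_mono _ _ dist_nonneg dist_nonneg hq₂
  have H2' : dist y₁ p ^ 2 < dist q₂ y₁ ^ 2 :=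
    sq_mono' _ _ dist_nonneg dist_nonneg hq₂'
  rw [hy₁, hy₂, key, keyp] at *
  have hk1 : 2 * (t₂ - t₁) * ⟪q₁ - m, n⟫ < 0 := by nlinarith
  have hk2 : 0 < 2 * (t₂ - t₁) * ⟪q₂ - m, n⟫ := by nlinarith
  have htt : 0 ≤ t₂ - t₁ := sub_nonneg.2 ht
  constructor
  · by_contra h
    push_neg at h
    nlinarith [mul_nonneg htt h]
  · by_contra h
    push_neg at h
    nlinarith [mul_nonneg htt (neg_nonneg.2 h)]
end

section
/- Let S be a finite nonempty family of segments in a metric space E, where each segment is given by its pair of endpoints (a, a'). For x ∈ E define fc(x) = max over segments (a,a') ∈ S of min(dist(x,a), dist(x,a')), and h(x) = min over segments (a,a') ∈ S of max(dist(x,a), dist(x,a')). Then there exists a radius r ≥ 0 such that the circle of radius r centered at x is a stabbing circle for S (i.e., for every segment, exactly one endpoint satisfies dist(x, endpoint) > r and the other satisfies dist(x, endpoint) ≤ r) if and only if fc(x) < h(x). -/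
theorem stmt_14 {E : Type*} [MetricSpace E]
    (S : Finset (E × E)) (hS : S.Nonempty) (x : E) :
    (∃ r : ℝ, 0 ≤ r ∧ ∀ s ∈ S,
        (dist x s.1 ≤ r ∧ r < dist x s.2) ∨ (dist x s.2 ≤ r ∧ r < dist x s.1)) ↔
      S.sup' hS (fun s => min (dist x s.1) (dist x s.2)) <
        S.inf' hS (fun s => max (dist x s.1) (dist x s.2)) := by
  constructor
  · rintro ⟨r, -, hr⟩
    have h1 : S.sup' hS (fun s => min (dist x s.1) (dist x s.2)) ≤ r := by
      apply Finset.sup'_le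
      intro s hs
      rcases hr s hs with ⟨h, h'⟩ | ⟨h, h'⟩
      · exact le_trans (min_le_left _ _) h
      · exact le_trans (min_le_right _ _) h
    have h2 : r < S.inf' hS (fun s => max (dist x s.1) (dist x s.2)) := by
      rw [Finset.lt_inf'_iff]
      intro s hs
      rcases hr s hs with ⟨h, h'⟩ | ⟨h, h'⟩
      · exact lt_of_lt_of_le h' (le_max_right _ _)
      · exact lt_of_lt_of_le h' (le_max_left _ _)
    exact lt_of_le_of_lt h1 h2
  · intro h
    refine ⟨S.sup' hS (fun s => min (dist x s.1) (dist x s.2)), ?_, ?_⟩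
    · obtain ⟨s, hs⟩ := hS
      exact le_trans (le_min dist_nonneg dist_nonneg) (Finset.le_sup' (fun s => min (dist x s.1) (dist x s.2)) hs)
    · intro s hs
      have hmin : min (dist x s.1) (dist x s.2) ≤
          S.sup' hS (fun s => min (dist x s.1) (dist x s.2)) := Finset.le_sup' (fun s => min (dist x s.1) (dist x s.2)) hs
      have hmax : S.sup' hS (fun s => min (dist x s.1) (dist x s.2)) <
          max (dist x s.1) (dist x s.2) :=
        lt_of_lt_of_le h (Finset.inf'_le (fun s => max (dist x s.1) (dist x s.2)) hs)
      rcases le_total (dist x s.1) (dist x s.2) with hle | hle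
      · exact Or.inl ⟨min_eq_left hle ▸ hmin, max_eq_right hle ▸ hmax⟩
      · exact Or.inr ⟨min_eq_right hle ▸ hmin, max_eq_left hle ▸ hmax⟩
end

section
/- Let p ≠ p' be points in a real inner product space E, m = (p+p')/2, n a nonzero vector orthogonal to p' − p, and for t ∈ ℝ let D(t) = closedBall(m + t·n, dist(m + t·n, p)) be the closed disk through p and p' centered at m + t·n. Let K ⊆ E be a connected set and t₁ < t₂ < t₃ real numbers. If K ∩ D(t₁) ≠ ∅, K ∩ D(t₂) = ∅, and K ∩ D(t₃) ≠ ∅, then K contains a point w with ⟨w − m, n⟩ ≤ 0 and a point w' with ⟨w' − m, n⟩ ≥ 0; hence K intersects the hyperplane {x : ⟨x − m, n⟩ = 0} through p and p', at a point not in D(t₂). -/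
open scoped RealInnerProductSpace

theorem stmt_16 {E : Type*} [NormedAddCommGroup E] [InnerProductSpace ℝ E]
    (p p' : E) (hpp' : p ≠ p') (n : E) (hn0 : n ≠ 0) (hn : ⟪n, p' - p⟫ = 0)
    (m : E) (hm : m = midpoint ℝ p p')
    (D : ℝ → Set E)
    (hD : ∀ t : ℝ, D t = Metric.closedBall (m + t • n) (dist (m + t • n) p))
    (K : Set E) (hK : IsConnected K)
    (t₁ t₂ t₃ : ℝ) (h12 : t₁ < t₂) (h23 : t₂ < t₃)
    (h₁ : (K ∩ D t₁).Nonempty) (h₂ : K ∩ D t₂ = ∅) (h₃ : (K ∩ D t₃).Nonempty) :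
    (∃ w ∈ K, ⟪w - m, n⟫ ≤ 0) ∧ (∃ w' ∈ K, 0 ≤ ⟪w' - m, n⟫) ∧
      ∃ z ∈ K, ⟪z - m, n⟫ = 0 ∧ z ∉ D t₂ := by
  have hmp : ⟪m - p, n⟫ = 0 := by
    have : m - p = (2:ℝ)⁻¹ • (p' - p) := by
      rw [hm, midpoint_eq_smul_add, invOf_eq_inv]; module
    rw [this, real_inner_smul_left, real_inner_comm, hn, mul_zero]
  -- membership characterization
  have hmem : ∀ (t : ℝ) (x : E),
      x ∈ D t ↔ ‖x - m‖ ^ 2 - 2 * t * ⟪x - m, n⟫ ≤ ‖m - p‖ ^ 2 := by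
    intro t x
    rw [hD, Metric.mem_closedBall]
    have h1 : dist x (m + t • n) ^ 2
        = ‖x - m‖ ^ 2 - 2 * t * ⟪x - m, n⟫ + t ^ 2 * ‖n‖ ^ 2 := by
      rw [dist_eq_norm]
      have : x - (m + t • n) = (x - m) - t • n := by abel
      rw [this, norm_sub_sq_real, real_inner_smul_right, norm_smul, Real.norm_eq_abs,
        mul_pow, sq_abs]
      ring
    have h2 : dist (m + t • n) p ^ 2 = ‖m - p‖ ^ 2 + t ^ 2 * ‖n‖ ^ 2 := by
      rw [dist_eq_norm]
      have : m + t • n - p = (m - p) + t • n := by abel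
      rw [this, norm_add_sq_real, real_inner_smul_right, hmp, norm_smul, Real.norm_eq_abs,
        mul_pow, sq_abs]
      ring
    constructor
    · intro h
      have := pow_le_pow_left₀ dist_nonneg h 2
      nlinarith
    · intro h
      have hsq : dist x (m + t • n) ^ 2 ≤ dist (m + t • n) p ^ 2 := by
        rw [h1, h2]; linarith
      exact (pow_le_pow_iff_left₀ dist_nonneg dist_nonneg two_ne_zero).mp hsq
  obtain ⟨w, hwK, hwD⟩ := h₁
  obtain ⟨w', hw'K, hw'D⟩ := h₃
  -- w has nonpositive inner product
  have hw : ⟪w - m, n⟫ ≤ 0 := by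
    by_contra h
    push_neg at h
    have hw2 : w ∈ D t₂ := by
      rw [hmem] at hwD ⊢
      nlinarith
    exact Set.eq_empty_iff_forall_notMem.mp h₂ w ⟨hwK, hw2⟩
  have hw' : 0 ≤ ⟪w' - m, n⟫ := by
    by_contra h
    push_neg at h
    have hw2 : w' ∈ D t₂ := by
      rw [hmem] at hw'D ⊢
      nlinarith
    exact Set.eq_empty_iff_forall_notMem.mp h₂ w' ⟨hw'K, hw2⟩
  refine ⟨⟨w, hwK, hw⟩, ⟨w', hw'K, hw'⟩, ?_⟩
  have hcont : ContinuousOn (fun x => ⟪x - m, n⟫) K :=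
    (Continuous.inner (continuous_id.sub continuous_const) continuous_const).continuousOn
  obtain ⟨z, hzK, hz⟩ := hK.isPreconnected.intermediate_value₂ hwK hw'K hcont
    continuousOn_const (by simpa using hw) (by simpa using hw')
  refine ⟨z, hzK, hz, fun hzD => ?_⟩
  exact Set.eq_empty_iff_forall_notMem.mp h₂ z ⟨hzK, hzD⟩
end
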